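/- Let T be a finite tree rooted at connecting node c, and let a finite set of agents occupy distinct vertices of T. Suppose one agent a* has strictly highest priority and at each timestep the highest-priority agent moves one edge toward c, pushing any agent on its next vertex one edge toward c as well (all pushed agents move simultaneously, preserving distinctness of positions). Then after at most dist(v*, c) timesteps, where v* is a*'s initial vertex, agent a* is at c, and throughout, no two agents ever occupy the same vertex. -/

import Mathlib

/-!
Agent `a*` loses one unit of distance to `c` per step until it sits at `c`. Collision-freeness
is proved one step at a time. Every moving agent other than `a*` was pushed by a moving agent
one level farther from `c`; following pushers (finitely many agents, so this terminates) leads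
back to `a*`. Hence the movers form a single chain below `a*` with exactly one mover per height,
so two movers landing on the same vertex start at the same height and coincide. A mover cannot
land on an agent that stays, since an agent whose vertex is entered is pushed.
-/

/-- One timestep from positions `x` to positions `y`; `h` is the distance to the root. -/
structure IsPushStep {A V : Type*} (x y : A → V) (h : V → ℕ) (a : A) : Prop where
  height_succ : ∀ b, y b ≠ x b → h (y b) + 1 = h (x b)
  pushed : ∀ b, y b ≠ x b → b = a ∨ ∃ p, p ≠ b ∧ y p = x b
  moved_of_entered : ∀ b p, p ≠ b → y p = x b → y b ≠ x b

namespace IsPushStep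

variable {A V : Type*} {x y : A → V} {h : V → ℕ} {a : A}

theorem exists_pusher (hs : IsPushStep x y h a) (hx : Function.Injective x) {b : A}
    (hb : y b ≠ x b) (hba : b ≠ a) :
    ∃ p, y p = x b ∧ y p ≠ x p ∧ h (x p) = h (x b) + 1 := by
  obtain ⟨p, hpb, hp⟩ := (hs.pushed b hb).resolve_left hba
  have hpm : y p ≠ x p := fun hstay => hpb (hx (hstay ▸ hp))
  exact ⟨p, hp, hpm, by rw [← hs.height_succ p hpm, hp]⟩

theorem height_lt_of_moved [Finite A] (hs : IsPushStep x y h a) (hx : Function.Injective x)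
    {b : A} (hb : y b ≠ x b) (hba : b ≠ a) :
    h (x b) < h (x a) := by
  obtain ⟨N, hN⟩ := (Set.finite_range (h ∘ x)).bddAbove
  have hbound : ∀ b, h (x b) ≤ N := fun b => hN ⟨b, rfl⟩
  suffices key : ∀ n b, N < h (x b) + n → y b ≠ x b → b ≠ a → h (x b) < h (x a) from
    key (N + 1) b (by omega) hb hba
  intro n
  induction n with
  | zero => intro b hNb; have := hbound b; omega
  | succ n ih =>
    intro b hNb hb hba
    obtain ⟨p, -, hpm, hp⟩ := hs.exists_pusher hx hb hba
    by_cases hpa : p = a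
    · subst hpa; omega
    · have := ih p (by omega) hpm hpa; omega

theorem eq_of_moved_of_height_eq [Finite A] (hs : IsPushStep x y h a)
    (hx : Function.Injective x) {b b' : A} (hb : y b ≠ x b) (hb' : y b' ≠ x b')
    (hbb' : h (x b) = h (x b')) : b = b' := by
  have eq_of_height : ∀ {b}, y b ≠ x b → h (x b) = h (x a) → b = a := fun hb hba =>
    by_contra fun hne => (hs.height_lt_of_moved hx hb hne).ne hba
  have le_height : ∀ {b}, y b ≠ x b → h (x b) ≤ h (x a) := fun {b} hb => by
    by_cases hba : b = a
    · rw [hba]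
    · exact (hs.height_lt_of_moved hx hb hba).le
  -- induction on the depth `n` of the two movers in the push chain below `a`
  suffices key : ∀ n b b', h (x a) = h (x b) + n → y b ≠ x b → y b' ≠ x b' →
      h (x b) = h (x b') → b = b' from
    key _ b b' (Nat.add_sub_cancel' (le_height hb)).symm hb hb' hbb'
  intro n
  induction n with
  | zero =>
    intro b b' hn hb hb' hbb'
    rw [eq_of_height hb (by omega), eq_of_height hb' (by omega)]
  | succ n ih =>
    intro b b' hn hb hb' hbb'
    obtain ⟨p, hp, hpm, hph⟩ := hs.exists_pusher hx hb fun hba => by subst hba; omega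
    obtain ⟨p', hp', hpm', hph'⟩ := hs.exists_pusher hx hb' fun hba => by subst hba; omega
    have hpp' : p = p' := ih p p' (by omega) hpm hpm' (by omega)
    exact hx (by rw [← hp, ← hp', hpp'])

theorem injective [Finite A] (hs : IsPushStep x y h a) (hx : Function.Injective x) :
    Function.Injective y := by
  intro b b' hbb'
  by_contra hne
  by_cases hb : y b = x b <;> by_cases hb' : y b' = x b'
  · exact hne (hx (by rw [← hb, ← hb', hbb']))
  · exact hs.moved_of_entered b b' (Ne.symm hne) (hbb' ▸ hb) hb
  · exact hs.moved_of_entered b' b hne (hbb' ▸ hb') hb'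
  · refine hne (hs.eq_of_moved_of_height_eq hx hb hb' ?_)
    have hdrop := hs.height_succ b hb
    rw [hbb'] at hdrop
    have := hs.height_succ b' hb'
    omega

end IsPushStep

theorem SimpleGraph.Connected.apply_dist_eq {V : Type*} {G : SimpleGraph V} (hG : G.Connected)
    {c : V} {u : ℕ → V} (hmove : ∀ t, u t ≠ c → G.dist (u (t + 1)) c + 1 = G.dist (u t) c)
    (hstay : ∀ t, u t = c → u (t + 1) = c) :
    u (G.dist (u 0) c) = c := by
  have progress : ∀ t, u t = c ∨ G.dist (u t) c + t = G.dist (u 0) c := by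
    intro t
    induction t with
    | zero => exact Or.inr rfl
    | succ t ih =>
      by_cases ht : u t = c
      · exact Or.inl (hstay t ht)
      · have := ih.resolve_left ht
        have := hmove t ht
        exact Or.inr (by omega)
  refine (progress _).elim id fun hd => hG.dist_eq_zero_iff.mp ?_
  omega

theorem stmt_11_general {V : Type*} {A : Type*} [Fintype A]
    (G : SimpleGraph V) (hT : G.IsTree) (c : V)
    (pos : A → ℕ → V) (hinit : Function.Injective (fun b => pos b 0))
    (astar : A)
    (hastar_move : ∀ t, pos astar t ≠ c →
      G.Adj (pos astar t) (pos astar (t + 1)) ∧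
      G.dist (pos astar (t + 1)) c + 1 = G.dist (pos astar t) c)
    (hastar_stay : ∀ t, pos astar t = c → pos astar (t + 1) = c)
    (hothers : ∀ t b, pos b (t + 1) = pos b t ∨
      (G.Adj (pos b t) (pos b (t + 1)) ∧ G.dist (pos b (t + 1)) c + 1 = G.dist (pos b t) c))
    (hpush : ∀ t b, pos b (t + 1) ≠ pos b t ↔
      (b = astar ∧ pos b t ≠ c) ∨ ∃ b', b' ≠ b ∧ pos b' (t + 1) = pos b t) :
    pos astar (G.dist (pos astar 0) c) = c ∧
      ∀ t, Function.Injective (fun b => pos b t) := by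
  refine ⟨hT.connected.apply_dist_eq (fun t ht => (hastar_move t ht).2) hastar_stay,
    fun t => ?_⟩
  induction t with
  | zero => exact hinit
  | succ t ih =>
    have hstep : IsPushStep (pos · t) (pos · (t + 1)) (G.dist · c) astar :=
      { height_succ := fun b hb => ((hothers t b).resolve_left hb).2
        pushed := fun b hb => ((hpush t b).mp hb).imp_left And.left
        moved_of_entered := fun b p hpb hp => (hpush t b).mpr (Or.inr ⟨p, hpb, hp⟩) }
    exact hstep.injective ih

/-- In a finite tree rooted at c with agents at distinct vertices, if the
highest-priority agent a* moves one edge toward c each timestep (staying once at c), and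
other agents move one edge toward c exactly when another agent moves onto their vertex
(the push chain), then a* reaches c after at most dist(v*, c) timesteps, and no two agents
ever occupy the same vertex. -/
theorem stmt_11 {V : Type*} [Fintype V] {A : Type*} [Fintype A]
    (G : SimpleGraph V) (hT : G.IsTree) (c : V)
    (pos : A → ℕ → V) (hinit : Function.Injective (fun b => pos b 0))
    (astar : A)
    (hastar_move : ∀ t, pos astar t ≠ c →
      G.Adj (pos astar t) (pos astar (t + 1)) ∧
      G.dist (pos astar (t + 1)) c + 1 = G.dist (pos astar t) c)
    (hastar_stay : ∀ t, pos astar t = c → pos astar (t + 1) = c)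
    (hothers : ∀ t b, pos b (t + 1) = pos b t ∨
      (G.Adj (pos b t) (pos b (t + 1)) ∧ G.dist (pos b (t + 1)) c + 1 = G.dist (pos b t) c))
    (hpush : ∀ t b, pos b (t + 1) ≠ pos b t ↔
      (b = astar ∧ pos b t ≠ c) ∨ ∃ b', b' ≠ b ∧ pos b' (t + 1) = pos b t) :
    pos astar (G.dist (pos astar 0) c) = c ∧
      ∀ t, Function.Injective (fun b => pos b t) :=
  stmt_11_general G hT c pos hinit astar hastar_move hastar_stay hothers hpush
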